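/- arXiv:2503.05140 — 3 statements merged into one kernel-verified Lean document; each statement's English description precedes it below -/
import Mathlib

section
/- Let N ∈ ℕ with N ≥ 2 and let γ satisfy the curve hypotheses with parameter N, with constants C₁⁽¹⁾, C₁⁽²⁾ and C₂⁽¹⁾,…,C₂⁽ᴺ⁾ as in the hypotheses. For j ∈ ℤ with j ≤ −1 and t ∈ [1/2,2] set Γ_j(t) := γ(2ʲt)/γ(2ʲ). Then, uniformly in j ≤ −1 and t ∈ [1/2,2]: (i) e^{−C₂⁽¹⁾} ≤ Γ_j(t) ≤ e^{C₂⁽¹⁾}; (ii) C₁⁽¹⁾/(2e^{C₂⁽¹⁾}) ≤ |Γ_j′(t)| ≤ 2e^{C₂⁽¹⁾}C₂⁽¹⁾; (iii) C₁⁽²⁾/(4e^{C₂⁽¹⁾}) ≤ |Γ_j″(t)| ≤ 4e^{C₂⁽¹⁾}C₂⁽²⁾; (iv) |Γ_j⁽ᵏ⁾(t)| ≤ 2ᵏ e^{C₂⁽¹⁾} C₂⁽ᵏ⁾ for every integer k with 2 ≤ k ≤ N. -/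
open MeasureTheory Filter Set
open scoped ENNReal NNReal

noncomputable section

/-- The rescaled curve `Γ_j(t) := γ(2ʲ t) / γ(2ʲ)`. -/
def Gam (γ : ℝ → ℝ) (j : ℤ) (t : ℝ) : ℝ := γ ((2 : ℝ) ^ j * t) / γ ((2 : ℝ) ^ j)

end

/-! The hypothesis `|x γ'(x) / γ(x)| ≤ C₂⁽¹⁾` says that `u ↦ log |γ(eᵘ)|` is `C₂⁽¹⁾`-Lipschitz.
Since `γ` has no zeros (by the lower bound with `C₁⁽¹⁾ > 0`) it keeps one sign, so
`Γ_j(t) = exp (log |γ(2ʲt)| - log |γ(2ʲ)|)` with exponent at most `C₂⁽¹⁾ |log t| ≤ C₂⁽¹⁾`.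
By the chain rule, `Γ_j⁽ᵏ⁾(t) = [(2ʲt)ᵏ γ⁽ᵏ⁾(2ʲt) / γ(2ʲt)] · Γ_j(t) / tᵏ`: the bracket is the
scale-invariant quantity controlled by the hypotheses, `Γ_j(t)` is bounded by the first step,
and `t⁻ᵏ ∈ [2⁻ᵏ, 2ᵏ]`. -/

open Real

theorem iteratedDerivWithin_comp_const_mul_of_mapsTo {𝕜 F : Type*} [NontriviallyNormedField 𝕜]
    [NormedAddCommGroup F] [NormedSpace 𝕜 F] {f : 𝕜 → F} {s t : Set 𝕜} {n : ℕ}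
    (hf : ContDiffOn 𝕜 n f s) (hs : UniqueDiffOn 𝕜 s) (ht : UniqueDiffOn 𝕜 t) (c : 𝕜)
    (hst : MapsTo (c * ·) t s) {x : 𝕜} (hx : x ∈ t) :
    iteratedDerivWithin n (fun x => f (c * x)) t x =
      c ^ n • iteratedDerivWithin n f s (c * x) := by
  induction n generalizing x with
  | zero => simp
  | succ n ih =>
    have hdiff : DifferentiableOn 𝕜 (iteratedDerivWithin n f s) s :=
      hf.differentiableOn_iteratedDerivWithin (Nat.cast_lt.mpr n.lt_succ_self) hs
    have hlin : HasDerivWithinAt (c * ·) c t x := by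
      simpa using ((hasDerivAt_id x).const_mul c).hasDerivWithinAt
    have hcomp : HasDerivWithinAt (fun y => c ^ n • iteratedDerivWithin n f s (c * y))
        (c ^ n • c • derivWithin (iteratedDerivWithin n f s) s (c * x)) t x :=
      (((hdiff _ (hst hx)).hasDerivWithinAt).scomp x hlin hst).const_smul (c ^ n)
    rw [iteratedDerivWithin_succ, derivWithin_congr (fun y hy => ih hf.of_succ hy)
      (ih hf.of_succ hx), hcomp.derivWithin (ht x hx), iteratedDerivWithin_succ, smul_smul,
      pow_succ]

theorem Set.OrdConnected.div_pos_of_ne_zero {f : ℝ → ℝ} {s : Set ℝ} (hs : s.OrdConnected)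
    (hf : ContinuousOn f s) (hf0 : ∀ x ∈ s, f x ≠ 0) {a b : ℝ} (ha : a ∈ s) (hb : b ∈ s) :
    0 < f b / f a := by
  by_contra! hnonpos
  have h0 : (0 : ℝ) ∈ uIcc (f a) (f b) := by
    rcases div_nonpos_iff.1 hnonpos with ⟨hb0, ha0⟩ | ⟨hb0, ha0⟩
    · exact mem_uIcc.2 (Or.inl ⟨ha0, hb0⟩)
    · exact mem_uIcc.2 (Or.inr ⟨hb0, ha0⟩)
  obtain ⟨z, hz, hfz⟩ := intermediate_value_uIcc (hf.mono (hs.uIcc_subset ha hb)) h0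
  exact hf0 z (hs.uIcc_subset ha hb hz) hfz

/-- `Real.log` is even, so `log (f x)` is `log |f x|` and `f` may take negative values. -/
theorem abs_log_sub_log_le_of_abs_mul_derivWithin_div_le {f : ℝ → ℝ} {s : Set ℝ} {C : ℝ}
    (hs : s.OrdConnected) (hf : DifferentiableOn ℝ f s) (hf0 : ∀ x ∈ s, f x ≠ 0)
    (hC : ∀ x ∈ s, |x * derivWithin f s x / f x| ≤ C) {a b : ℝ} (ha : a ∈ s) (hb : b ∈ s)
    (ha0 : 0 < a) (hb0 : 0 < b) :
    |log (f b) - log (f a)| ≤ C * |log b - log a| := by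
  have hconv : Convex ℝ (exp ⁻¹' s) :=
    Set.OrdConnected.convex ⟨fun _ hx _ hy _ hz =>
      hs.out hx hy ⟨exp_le_exp.2 hz.1, exp_le_exp.2 hz.2⟩⟩
  have hderiv : ∀ u ∈ exp ⁻¹' s, HasDerivWithinAt (fun u => log (f (exp u)))
      (derivWithin f s (exp u) * exp u / f (exp u)) (exp ⁻¹' s) u := fun u hu =>
    (((hf _ hu).hasDerivWithinAt).comp u (hasDerivAt_exp u).hasDerivWithinAt
      (mapsTo_preimage _ _)).log (hf0 _ hu)
  have hbound : ∀ u ∈ exp ⁻¹' s, ‖derivWithin f s (exp u) * exp u / f (exp u)‖ ≤ C :=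
    fun u hu => by simpa only [Real.norm_eq_abs, mul_comm] using hC _ hu
  simpa only [exp_log ha0, exp_log hb0, Real.norm_eq_abs] using
    hconv.norm_image_sub_le_of_norm_hasDerivWithin_le hderiv hbound
      (x := log a) (y := log b) (by simpa [exp_log ha0]) (by simpa [exp_log hb0])

theorem abs_log_le_one_of_mem_Icc {t : ℝ} (ht : t ∈ Icc (1 / 2 : ℝ) 2) : |log t| ≤ 1 := by
  have hlog2 : log 2 < 1 := by linarith [log_two_lt_d9]
  have hupper : log t ≤ log 2 := log_le_log (by linarith [ht.1]) ht.2
  have hlower : log (1 / 2) ≤ log t := log_le_log (by norm_num) ht.1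
  rw [one_div, log_inv] at hlower
  exact abs_le.2 ⟨by linarith, by linarith⟩

theorem abs_mul_div_pow_le_of_mem_Icc {R G A E t : ℝ} (k : ℕ) (hR : |R| ≤ A) (hG0 : 0 ≤ G)
    (hG : G ≤ E) (ht : t ∈ Icc (1 / 2 : ℝ) 2) : |R| * G / t ^ k ≤ 2 ^ k * E * A := by
  have ht0 : 0 < t := by linarith [ht.1]
  have hA : 0 ≤ A := (abs_nonneg R).trans hR
  have hinv : 1 / t ^ k ≤ 2 ^ k := by
    rw [← one_div_pow]
    exact pow_le_pow_left₀ (by positivity) (by rw [div_le_iff₀ ht0]; linarith [ht.1]) k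
  calc |R| * G / t ^ k = |R| * G * (1 / t ^ k) := by ring
    _ ≤ A * E * 2 ^ k := by gcongr; exact mul_nonneg hA (hG0.trans hG)
    _ = 2 ^ k * E * A := by ring

theorem le_abs_mul_div_pow_of_mem_Icc {R G A E t : ℝ} (k : ℕ) (hR : A ≤ |R|) (hE : 0 < E)
    (hG : E⁻¹ ≤ G) (ht : t ∈ Icc (1 / 2 : ℝ) 2) : A / (2 ^ k * E) ≤ |R| * G / t ^ k := by
  have ht0 : 0 < t := by linarith [ht.1]
  have hG0 : 0 ≤ G := (inv_pos.2 hE).le.trans hG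
  calc A / (2 ^ k * E) = A * E⁻¹ / 2 ^ k := by field_simp
    _ ≤ |R| * G / t ^ k := by gcongr; exact ht.2

theorem mapsTo_two_zpow_mul_Icc {j : ℤ} (hj : j ≤ -1) :
    MapsTo ((2 : ℝ) ^ j * ·) (Icc (1 / 2) 2) (Ioc 0 1) := by
  intro t ht
  have hc : (2 : ℝ) ^ j ≤ 1 / 2 := by
    simpa using zpow_le_zpow_right₀ (by norm_num : (1 : ℝ) ≤ 2) hj
  have hc0 : (0 : ℝ) < 2 ^ j := by positivity
  exact ⟨mul_pos hc0 (by linarith [ht.1]), by nlinarith [ht.2]⟩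

theorem Gam_mem_Icc_exp {γ : ℝ → ℝ} {C : ℝ} (hγ : DifferentiableOn ℝ γ (Ioc 0 1))
    (hγ0 : ∀ x ∈ Ioc (0 : ℝ) 1, γ x ≠ 0)
    (hC : ∀ x ∈ Ioc (0 : ℝ) 1, |x * derivWithin γ (Ioc 0 1) x / γ x| ≤ C) {j : ℤ}
    (hj : j ≤ -1) {t : ℝ} (ht : t ∈ Icc (1 / 2 : ℝ) 2) :
    Gam γ j t ∈ Icc (exp (-C)) (exp C) := by
  have hc : (2 : ℝ) ^ j ∈ Ioc 0 1 := by
    simpa using mapsTo_two_zpow_mul_Icc hj (by norm_num : (1 : ℝ) ∈ Icc (1 / 2) 2)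
  have hct := mapsTo_two_zpow_mul_Icc hj ht
  have hpos : 0 < Gam γ j t :=
    ordConnected_Ioc.div_pos_of_ne_zero hγ.continuousOn hγ0 hc hct
  have hlog : |log (Gam γ j t)| ≤ C := calc
    |log (Gam γ j t)| = |log (γ (2 ^ j * t)) - log (γ (2 ^ j))| := by
      rw [Gam, log_div (hγ0 _ hct) (hγ0 _ hc)]
    _ ≤ C * |log (2 ^ j * t) - log (2 ^ j)| :=
      abs_log_sub_log_le_of_abs_mul_derivWithin_div_le ordConnected_Ioc hγ hγ0 hC hc hct hc.1
        hct.1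
    _ = C * |log t| := by rw [log_mul hc.1.ne' (by linarith [ht.1]), add_sub_cancel_left]
    _ ≤ C :=
      mul_le_of_le_one_right ((abs_nonneg _).trans (hC _ hc)) (abs_log_le_one_of_mem_Icc ht)
  rw [← exp_log hpos]
  exact ⟨exp_le_exp.2 (neg_le_of_abs_le hlog), exp_le_exp.2 (le_of_abs_le hlog)⟩

theorem iteratedDerivWithin_Gam {γ : ℝ → ℝ} {n : ℕ} (hγ : ContDiffOn ℝ n γ (Ioc 0 1)) {j : ℤ}
    (hj : j ≤ -1) {t : ℝ} (ht : t ∈ Icc (1 / 2 : ℝ) 2) :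
    iteratedDerivWithin n (Gam γ j) (Icc (1 / 2) 2) t =
      ((2 : ℝ) ^ j) ^ n * iteratedDerivWithin n γ (Ioc 0 1) (2 ^ j * t) / γ (2 ^ j) := by
  have hGam : Gam γ j = fun t => γ (2 ^ j * t) * (γ (2 ^ j))⁻¹ :=
    funext fun _ => div_eq_mul_inv _ _
  rw [hGam, iteratedDerivWithin_mul_const_field,
    iteratedDerivWithin_comp_const_mul_of_mapsTo hγ (uniqueDiffOn_Ioc 0 1)
      (uniqueDiffOn_Icc (by norm_num)) _ (mapsTo_two_zpow_mul_Icc hj) ht,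
    smul_eq_mul, div_eq_mul_inv]

theorem abs_iteratedDerivWithin_Gam {γ : ℝ → ℝ} {n : ℕ} (hγ : ContDiffOn ℝ n γ (Ioc 0 1))
    {j : ℤ} (hj : j ≤ -1) {t : ℝ} (ht : t ∈ Icc (1 / 2 : ℝ) 2) (hγ0 : γ (2 ^ j * t) ≠ 0)
    (hpos : 0 < Gam γ j t) :
    |iteratedDerivWithin n (Gam γ j) (Icc (1 / 2) 2) t| =
      |(2 ^ j * t) ^ n * iteratedDerivWithin n γ (Ioc 0 1) (2 ^ j * t) / γ (2 ^ j * t)| *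
        Gam γ j t / t ^ n := by
  have ht0 : 0 < t := by linarith [ht.1]
  have hγc : γ (2 ^ j) ≠ 0 := fun h => by simp [Gam, h] at hpos
  rw [← abs_of_pos hpos, ← abs_of_pos (pow_pos ht0 n), ← abs_mul, ← abs_div,
    iteratedDerivWithin_Gam hγ hj ht, Gam]
  congr 1
  field_simp
  ring

theorem rescaled_curve_bounds_general (N : ℕ) (hN : 2 ≤ N) (γ : ℝ → ℝ) (C₁ C₂ : ℕ → ℝ)
    (hsmooth : ContDiffOn ℝ N γ (Set.Ioc 0 1))
    (hC₁pos : ∀ j : ℕ, 1 ≤ j → j ≤ 2 → 0 < C₁ j)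
    (hlow : ∀ j : ℕ, 1 ≤ j → j ≤ 2 → ∀ t ∈ Set.Ioc (0 : ℝ) 1,
      C₁ j ≤ |t ^ j * iteratedDerivWithin j γ (Set.Ioc 0 1) t / γ t|)
    (hup : ∀ j : ℕ, 1 ≤ j → j ≤ N → ∀ t ∈ Set.Ioc (0 : ℝ) 1,
      |t ^ j * iteratedDerivWithin j γ (Set.Ioc 0 1) t / γ t| ≤ C₂ j) :
    ∀ j : ℤ, j ≤ -1 → ∀ t ∈ Set.Icc (1/2 : ℝ) 2,
      (Real.exp (-(C₂ 1)) ≤ Gam γ j t ∧ Gam γ j t ≤ Real.exp (C₂ 1)) ∧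
      (C₁ 1 / (2 * Real.exp (C₂ 1)) ≤
          |iteratedDerivWithin 1 (Gam γ j) (Set.Icc (1/2 : ℝ) 2) t| ∧
        |iteratedDerivWithin 1 (Gam γ j) (Set.Icc (1/2 : ℝ) 2) t| ≤
          2 * Real.exp (C₂ 1) * C₂ 1) ∧
      (C₁ 2 / (4 * Real.exp (C₂ 1)) ≤
          |iteratedDerivWithin 2 (Gam γ j) (Set.Icc (1/2 : ℝ) 2) t| ∧
        |iteratedDerivWithin 2 (Gam γ j) (Set.Icc (1/2 : ℝ) 2) t| ≤
          4 * Real.exp (C₂ 1) * C₂ 2) ∧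
      (∀ k : ℕ, 2 ≤ k → k ≤ N →
        |iteratedDerivWithin k (Gam γ j) (Set.Icc (1/2 : ℝ) 2) t| ≤
          2 ^ k * Real.exp (C₂ 1) * C₂ k) := by
  intro j hj t ht
  have hct := mapsTo_two_zpow_mul_Icc hj ht
  have hγ0 : ∀ x ∈ Ioc (0 : ℝ) 1, γ x ≠ 0 := fun x hx hx0 => by
    simpa [hx0] using (hC₁pos 1 le_rfl one_le_two).trans_le (hlow 1 le_rfl one_le_two x hx)
  have hΓ : Gam γ j t ∈ Icc (exp (-C₂ 1)) (exp (C₂ 1)) :=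
    Gam_mem_Icc_exp (hsmooth.differentiableOn (by exact_mod_cast (by omega : N ≠ 0))) hγ0
      (fun x hx => by simpa using hup 1 le_rfl (by omega) x hx) hj ht
  have hΓpos : 0 < Gam γ j t := (exp_pos _).trans_le hΓ.1
  have hderiv (k : ℕ) (hk : k ≤ N) := abs_iteratedDerivWithin_Gam
    (hsmooth.of_le (by exact_mod_cast hk)) hj ht (hγ0 _ hct) hΓpos
  have hupper (k : ℕ) (hk1 : 1 ≤ k) (hk : k ≤ N) :
      |iteratedDerivWithin k (Gam γ j) (Icc (1 / 2) 2) t| ≤ 2 ^ k * exp (C₂ 1) * C₂ k := by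
    rw [hderiv k hk]
    exact abs_mul_div_pow_le_of_mem_Icc k (hup k hk1 hk _ hct) hΓpos.le hΓ.2 ht
  have hlower (k : ℕ) (hk1 : 1 ≤ k) (hk : k ≤ 2) :
      C₁ k / (2 ^ k * exp (C₂ 1)) ≤ |iteratedDerivWithin k (Gam γ j) (Icc (1 / 2) 2) t| := by
    rw [hderiv k (hk.trans hN)]
    exact le_abs_mul_div_pow_of_mem_Icc k (hlow k hk1 hk _ hct) (exp_pos _)
      (by rw [← exp_neg]; exact hΓ.1) ht
  have hfour : (2 : ℝ) ^ 2 = 4 := by norm_num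
  refine ⟨hΓ, ⟨?_, ?_⟩, ⟨?_, ?_⟩, fun k hk hkN => hupper k (by omega) hkN⟩
  · simpa only [pow_one] using hlower 1 le_rfl one_le_two
  · simpa only [pow_one] using hupper 1 le_rfl (by omega)
  · simpa only [hfour] using hlower 2 one_le_two le_rfl
  · simpa only [hfour] using hupper 2 one_le_two hN

/-- Lemma 2.1 (i)-(iv): uniform bounds for `Γ_j` and its derivatives on `[1/2, 2]`,
for `j ≤ -1`, under the curve hypotheses with parameter `N` with constants
`C₁ j` (lower bounds, `j = 1,2`) and `C₂ j` (upper bounds, `j = 1,…,N`). -/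
theorem rescaled_curve_bounds (N : ℕ) (hN : 2 ≤ N) (γ : ℝ → ℝ) (C₁ C₂ : ℕ → ℝ)
    (hsmooth : ContDiffOn ℝ N γ (Set.Ioc 0 1))
    (hlim : Filter.Tendsto γ (nhdsWithin 0 (Set.Ioi 0)) (nhds 0))
    (hmono : MonotoneOn γ (Set.Ioc 0 1) ∨ AntitoneOn γ (Set.Ioc 0 1))
    (hC₁pos : ∀ j : ℕ, 1 ≤ j → j ≤ 2 → 0 < C₁ j)
    (hC₂pos : ∀ j : ℕ, 1 ≤ j → j ≤ N → 0 < C₂ j)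
    (hlow : ∀ j : ℕ, 1 ≤ j → j ≤ 2 → ∀ t ∈ Set.Ioc (0 : ℝ) 1,
      C₁ j ≤ |t ^ j * iteratedDerivWithin j γ (Set.Ioc 0 1) t / γ t|)
    (hup : ∀ j : ℕ, 1 ≤ j → j ≤ N → ∀ t ∈ Set.Ioc (0 : ℝ) 1,
      |t ^ j * iteratedDerivWithin j γ (Set.Ioc 0 1) t / γ t| ≤ C₂ j) :
    ∀ j : ℤ, j ≤ -1 → ∀ t ∈ Set.Icc (1/2 : ℝ) 2,
      (Real.exp (-(C₂ 1)) ≤ Gam γ j t ∧ Gam γ j t ≤ Real.exp (C₂ 1)) ∧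
      (C₁ 1 / (2 * Real.exp (C₂ 1)) ≤
          |iteratedDerivWithin 1 (Gam γ j) (Set.Icc (1/2 : ℝ) 2) t| ∧
        |iteratedDerivWithin 1 (Gam γ j) (Set.Icc (1/2 : ℝ) 2) t| ≤
          2 * Real.exp (C₂ 1) * C₂ 1) ∧
      (C₁ 2 / (4 * Real.exp (C₂ 1)) ≤
          |iteratedDerivWithin 2 (Gam γ j) (Set.Icc (1/2 : ℝ) 2) t| ∧
        |iteratedDerivWithin 2 (Gam γ j) (Set.Icc (1/2 : ℝ) 2) t| ≤
          4 * Real.exp (C₂ 1) * C₂ 2) ∧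
      (∀ k : ℕ, 2 ≤ k → k ≤ N →
        |iteratedDerivWithin k (Gam γ j) (Set.Icc (1/2 : ℝ) 2) t| ≤
          2 ^ k * Real.exp (C₂ 1) * C₂ k) :=
  rescaled_curve_bounds_general N hN γ C₁ C₂ hsmooth hC₁pos hlow hup
end

section
/- Let N ∈ ℕ with N ≥ 3 and let γ satisfy the curve hypotheses with parameter N. For j ∈ ℤ with j ≤ −1 set Γ_j(t) := γ(2ʲt)/γ(2ʲ) for t ∈ [1/2,2]. Since Γ_j″ is continuous and bounded away from 0 on [1/2,2], the derivative Γ_j′ is strictly monotone on [1/2,2] and hence has an inverse function (Γ_j′)⁻¹ defined on the interval Γ_j′([1/2,2]). Then for every integer k with 0 ≤ k < N there is a constant C, depending only on γ, N and k (but not on j), such that |((Γ_j′)⁻¹)⁽ᵏ⁾(s)| ≤ C for all j ≤ −1 and all s in the interior of Γ_j′([1/2,2]). -/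
open MeasureTheory Filter Set
open scoped ENNReal NNReal

noncomputable section

/-- The curve hypotheses with parameter `N`. -/
def CurveHyp (γ : ℝ → ℝ) (N : ℕ) : Prop :=
  ContDiffOn ℝ N γ (Set.Ioc 0 1) ∧
  Filter.Tendsto γ (nhdsWithin 0 (Set.Ioi 0)) (nhds 0) ∧
  (MonotoneOn γ (Set.Ioc 0 1) ∨ AntitoneOn γ (Set.Ioc 0 1)) ∧
  (∀ j : ℕ, 1 ≤ j → j ≤ 2 → ∃ C : ℝ, 0 < C ∧ ∀ t ∈ Set.Ioc (0 : ℝ) 1,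
    C ≤ |t ^ j * iteratedDerivWithin j γ (Set.Ioc 0 1) t / γ t|) ∧
  (∀ j : ℕ, 1 ≤ j → j ≤ N → ∃ C : ℝ, 0 < C ∧ ∀ t ∈ Set.Ioc (0 : ℝ) 1,
    |t ^ j * iteratedDerivWithin j γ (Set.Ioc 0 1) t / γ t| ≤ C)

/-- `Γ_j'`, the derivative of the rescaled curve on `[1/2,2]`. -/
def GamDeriv (γ : ℝ → ℝ) (j : ℤ) (t : ℝ) : ℝ :=
  derivWithin (Gam γ j) (Set.Icc (1/2 : ℝ) 2) t

/-!
Rescaling turns the curve hypotheses into bounds on `Γ_j` that are uniform in `j`: at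
`x = 2ʲ t` one has `Γ_j⁽ᵐ⁾(t) = (xᵐ γ⁽ᵐ⁾(x) / γ(x)) · Γ_j(t) / tᵐ`, and integrating
`|γ'/γ| ≤ K/x` shows `e^{-K} ≤ |Γ_j(t)| ≤ e^K`. Hence `|Γ_j⁽ᵐ⁾| ≤ M` for `m ≤ N` and
`|Γ_j''| ≥ c` on `(1/2, 2)`.

The inverse `g` of `Γ_j'` solves the autonomous equation `g' = h ∘ g` with `h = 1 / Γ_j''`.
Faà di Bruno bounds the derivatives of `h` in terms of `c` and `M`; differentiating
`g' = h ∘ g` and applying Faà di Bruno again bounds `g⁽ᵏ⁾` by induction on `k`, with constants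
depending only on `c`, `M` and `N`.
-/

open scoped Nat Topology

theorem iteratedDerivWithin_of_mem_nhds {f : ℝ → ℝ} {s : Set ℝ} {x : ℝ} (hs : s ∈ 𝓝 x) (n : ℕ) :
    iteratedDerivWithin n f s x = iteratedDeriv n f x := by
  rw [iteratedDerivWithin, ← univ_inter s, iteratedFDerivWithin_inter hs,
    iteratedFDerivWithin_univ, iteratedDeriv]

theorem norm_iteratedFDerivWithin_of_isOpen {f : ℝ → ℝ} {s : Set ℝ} {x : ℝ} (hs : IsOpen s)
    (hx : x ∈ s) (n : ℕ) : ‖iteratedFDerivWithin ℝ n f s x‖ = |iteratedDeriv n f x| := by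
  rw [norm_iteratedFDerivWithin_eq_norm_iteratedDerivWithin, iteratedDerivWithin_of_isOpen hs hx,
    Real.norm_eq_abs]

theorem iteratedDerivWithin_comp_const_mul_preimage {f : ℝ → ℝ} {s : Set ℝ}
    (hs : UniqueDiffOn ℝ s) {c x : ℝ} (hc : c ≠ 0) (hx : c * x ∈ s) (n : ℕ) :
    iteratedDerivWithin n (fun y => f (c * y)) ((c * ·) ⁻¹' s) x
      = c ^ n * iteratedDerivWithin n f s (c * x) := by
  let e := ContinuousLinearEquiv.unitsEquivAut ℝ (Units.mk0 c hc)
  have he : ⇑e = (c * ·) := funext fun y => by simp [e, mul_comm]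
  have key := e.iteratedFDerivWithin_comp_right f hs (x := x) (by rwa [he]) n
  rw [he, Function.comp_def] at key
  rw [iteratedDerivWithin, key]
  simp [iteratedFDerivWithin_apply_eq_iteratedDerivWithin_mul_prod, he]

theorem abs_le_exp_mul_abs_of_abs_mul_deriv_div_le {f f' : ℝ → ℝ} {s : Set ℝ} {K : ℝ}
    (hs : Convex ℝ s) (hf : ∀ x ∈ s, HasDerivWithinAt f (f' x) s x) (hf0 : ∀ x ∈ s, f x ≠ 0)
    (hK : ∀ x ∈ s, |x * f' x / f x| ≤ K) {x y : ℝ} (hx : x ∈ s) (hy : y ∈ s) (hx0 : 0 < x)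
    (hxy : x ≤ 2 * y) (hyx : y ≤ 2 * x) : |f x| ≤ Real.exp K * |f y| := by
  set m := min x y
  have hm : 0 < m := lt_min hx0 (by linarith)
  have hseg : uIcc x y ⊆ s := by rw [← segment_eq_uIcc]; exact hs.segment_subset hx hy
  have hderiv : ∀ z ∈ uIcc x y,
      HasDerivWithinAt (fun z => Real.log (f z)) (f' z / f z) (uIcc x y) z :=
    fun z hz => ((hf z (hseg hz)).mono hseg).log (hf0 z (hseg hz))
  have hbound : ∀ z ∈ uIcc x y, ‖f' z / f z‖ ≤ K / m := by
    intro z hz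
    have hmz : m ≤ z := hz.1
    have hz0 : 0 < z := hm.trans_le hmz
    have := hK z (hseg hz)
    rw [mul_div_assoc, abs_mul, abs_of_pos hz0] at this
    rw [Real.norm_eq_abs, le_div_iff₀ hm]
    nlinarith [abs_nonneg (f' z / f z)]
  have hlog := (convex_uIcc x y).norm_image_sub_le_of_norm_hasDerivWithin_le hderiv hbound
      right_mem_uIcc left_mem_uIcc
  have hK0 : 0 ≤ K := (abs_nonneg _).trans (hK x hx)
  have hdist : ‖x - y‖ ≤ m := by
    rw [Real.norm_eq_abs, abs_le]
    rcases le_total x y with h | h <;> simp only [m, min_eq_left, min_eq_right, h] <;>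
      constructor <;> linarith
  have hlog' : Real.log |f x| ≤ K + Real.log |f y| := by
    rw [Real.log_abs, Real.log_abs]
    have : K / m * ‖x - y‖ ≤ K := by rw [div_mul_eq_mul_div, div_le_iff₀ hm]; gcongr
    rw [Real.norm_eq_abs] at hlog
    linarith [le_abs_self (Real.log (f x) - Real.log (f y))]
  calc |f x| = Real.exp (Real.log |f x|) := (Real.exp_log (abs_pos.2 (hf0 x hx))).symm
    _ ≤ Real.exp (K + Real.log |f y|) := Real.exp_le_exp.2 hlog'
    _ = Real.exp K * |f y| := by rw [Real.exp_add, Real.exp_log (abs_pos.2 (hf0 y hy))]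

theorem abs_iteratedDeriv_inv_le {c y : ℝ} (hc : 0 < c) (hy : c ≤ |y|) (n : ℕ) :
    |iteratedDeriv n Inv.inv y| ≤ n ! / c ^ (n + 1) := by
  have hy0 : 0 < |y| := hc.trans_le hy
  rw [iteratedDeriv_eq_iterate, iter_deriv_inv, abs_mul, abs_mul, abs_pow, abs_neg, abs_one,
    one_pow, one_mul, Nat.abs_cast, show (-1 - n : ℤ) = -((n + 1 : ℕ) : ℤ) by push_cast; ring,
    zpow_neg, zpow_natCast, abs_inv, abs_pow, ← div_eq_mul_inv]
  gcongr

theorem abs_iteratedDeriv_inv_comp_le {ψ : ℝ → ℝ} {U : Set ℝ} {n : ℕ} {c M : ℝ} (hU : IsOpen U)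
    (hψ : ContDiffOn ℝ n ψ U) (hc : 0 < c) (hc1 : c ≤ 1) (hM : 1 ≤ M)
    (hψc : ∀ x ∈ U, c ≤ |ψ x|) (hψM : ∀ i, 1 ≤ i → i ≤ n → ∀ x ∈ U, |iteratedDeriv i ψ x| ≤ M)
    {i : ℕ} (hi : i ≤ n) {x : ℝ} (hx : x ∈ U) :
    |iteratedDeriv i (fun y => (ψ y)⁻¹) x| ≤ n ! * (n ! / c ^ (n + 1)) * M ^ n := by
  have hψ0 : MapsTo ψ U {0}ᶜ := fun y hy => abs_pos.1 (hc.trans_le (hψc y hy))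
  have hinv : ∀ l ≤ i, ‖iteratedFDerivWithin ℝ l Inv.inv {0}ᶜ (ψ x)‖ ≤ n ! / c ^ (n + 1) := by
    intro l hl
    rw [norm_iteratedFDerivWithin_of_isOpen isOpen_compl_singleton (hψ0 hx)]
    exact (abs_iteratedDeriv_inv_le hc (hψc x hx) l).trans <|
      div_le_div₀ (by positivity) (by exact_mod_cast Nat.factorial_le (hl.trans hi))
        (by positivity) (pow_le_pow_of_le_one hc.le hc1 (by omega))
  have hψi : ∀ l, 1 ≤ l → l ≤ i → ‖iteratedFDerivWithin ℝ l ψ U x‖ ≤ M ^ l := fun l hl hli => by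
    rw [norm_iteratedFDerivWithin_of_isOpen hU hx]
    exact (hψM l hl (hli.trans hi) x hx).trans (le_self_pow₀ hM (by omega))
  have hFaa := norm_iteratedFDerivWithin_comp_le (contDiffOn_inv ℝ (n := i))
    (hψ.of_le (by exact_mod_cast hi)) le_rfl isOpen_compl_singleton.uniqueDiffOn
    hU.uniqueDiffOn hψ0 hx hinv hψi
  rw [norm_iteratedFDerivWithin_of_isOpen hU hx] at hFaa
  refine hFaa.trans ?_
  gcongr

/-- If `g' = h ∘ g` and `|h⁽ⁱ⁾| ≤ A`, then `g', …, g⁽ᵏ⁺¹⁾` are bounded by `odeDerivBound A k`;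
the recursion is the Faà di Bruno estimate `(h ∘ g)⁽ᵏ⁾ ≤ k! · A · Dᵏ`. -/
def odeDerivBound (A : ℝ) : ℕ → ℝ
  | 0 => A
  | k + 1 => max (odeDerivBound A k) ((k + 1)! * A * max 1 (odeDerivBound A k) ^ (k + 1))

theorem le_odeDerivBound (A : ℝ) : ∀ k, A ≤ odeDerivBound A k
  | 0 => le_rfl
  | k + 1 => (le_odeDerivBound A k).trans (le_max_left _ _)

section AutonomousODE

variable {g h : ℝ → ℝ} {U V : Set ℝ} {m : ℕ}

theorem contDiffOn_of_hasDerivAt_comp (hV : IsOpen V) (hgV : MapsTo g V U)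
    (hg : ∀ x ∈ V, HasDerivAt g (h (g x)) x) (hh : ContDiffOn ℝ m h U) :
    ContDiffOn ℝ (m + 1) g V := by
  have hdiff : DifferentiableOn ℝ g V :=
    fun x hx => (hg x hx).differentiableAt.differentiableWithinAt
  have hderiv : EqOn (deriv g) (h ∘ g) V := fun x hx => (hg x hx).deriv
  induction m with
  | zero =>
    exact (contDiffOn_succ_iff_deriv_of_isOpen hV).2 ⟨hdiff, by simp,
      (hh.comp (contDiffOn_zero.2 hdiff.continuousOn) hgV).congr hderiv⟩
  | succ m ih =>
    exact (contDiffOn_succ_iff_deriv_of_isOpen hV).2 ⟨hdiff, by simp,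
      (hh.comp (ih hh.of_succ) hgV).congr hderiv⟩

theorem abs_iteratedDeriv_le_odeDerivBound (hU : IsOpen U) (hV : IsOpen V) (hgV : MapsTo g V U)
    (hg : ∀ x ∈ V, HasDerivAt g (h (g x)) x) (hh : ContDiffOn ℝ m h U) {A : ℝ}
    (hA : ∀ i ≤ m, ∀ y ∈ U, |iteratedDeriv i h y| ≤ A) {k : ℕ} (hk : k ≤ m) {i : ℕ} (hi : i ≤ k)
    {x : ℝ} (hx : x ∈ V) : |iteratedDeriv (i + 1) g x| ≤ odeDerivBound A k := by
  induction k generalizing i with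
  | zero =>
    obtain rfl : i = 0 := by omega
    simpa [odeDerivBound, (hg x hx).deriv] using hA 0 (by omega) _ (hgV hx)
  | succ k ih =>
    rcases hi.lt_or_eq with hi | rfl
    · exact (ih (by omega) (by omega)).trans (le_max_left _ _)
    set D := max 1 (odeDerivBound A k)
    have hhi : ∀ l ≤ k + 1, ‖iteratedFDerivWithin ℝ l h U (g x)‖ ≤ A := fun l hl => by
      rw [norm_iteratedFDerivWithin_of_isOpen hU (hgV hx)]
      exact hA l (by omega) _ (hgV hx)
    have hgi : ∀ l, 1 ≤ l → l ≤ k + 1 → ‖iteratedFDerivWithin ℝ l g V x‖ ≤ D ^ l := by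
      intro l hl hlk
      obtain ⟨l, rfl⟩ := Nat.exists_eq_add_of_le' hl
      rw [norm_iteratedFDerivWithin_of_isOpen hV hx]
      exact (ih (by omega) (by omega)).trans
        ((le_max_right _ _).trans (le_self_pow₀ (le_max_left _ _) (by omega)))
    have hFaa := norm_iteratedFDerivWithin_comp_le (hh.of_le (by exact_mod_cast hk))
      ((contDiffOn_of_hasDerivAt_comp hV hgV hg hh).of_le
        (by exact_mod_cast (by omega : k + 1 ≤ m + 1)))
      le_rfl hU.uniqueDiffOn hV.uniqueDiffOn hgV hx hhi hgi
    rw [norm_iteratedFDerivWithin_of_isOpen hV hx] at hFaa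
    have hderiv : EqOn (deriv g) (h ∘ g) V := fun x hx => (hg x hx).deriv
    rw [iteratedDeriv_succ', (hderiv.iteratedDeriv_of_isOpen hV (k + 1)) hx]
    exact hFaa.trans (le_max_right _ _)

end AutonomousODE

namespace Set.LeftInvOn

variable {f g : ℝ → ℝ} {a b : ℝ}

theorem mem_Ioo_of_mem_interior_image (hf : ContinuousOn f (Icc a b))
    (hg : LeftInvOn g f (Icc a b)) {t : ℝ} (ht : t ∈ Icc a b)
    (hft : f t ∈ interior (f '' Icc a b)) : t ∈ Ioo a b := by
  -- an endpoint of `[a, b]` is mapped to an extreme point of the image, which is not interior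
  have hext : t = a ∨ t = b → f '' Icc a b ⊆ Ici (f t) ∨ f '' Icc a b ⊆ Iic (f t) := by
    intro hend
    rcases hf.strictMonoOn_of_injOn_Icc' (ht.1.trans ht.2) hg.injOn with hmono | hanti <;>
      rcases hend with rfl | rfl
    · exact .inl <| by rintro _ ⟨x, hx, rfl⟩; exact hmono.monotoneOn ht hx hx.1
    · exact .inr <| by rintro _ ⟨x, hx, rfl⟩; exact hmono.monotoneOn hx ht hx.2
    · exact .inr <| by rintro _ ⟨x, hx, rfl⟩; exact hanti.antitoneOn ht hx hx.1
    · exact .inl <| by rintro _ ⟨x, hx, rfl⟩; exact hanti.antitoneOn hx ht hx.2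
  by_contra hIoo
  rcases hext (by by_contra!; exact hIoo ⟨ht.1.lt_of_ne' this.1, ht.2.lt_of_ne this.2⟩)
    with hsub | hsub
  · simpa using interior_mono hsub hft
  · simpa using interior_mono hsub hft

theorem continuousAt_of_mem_interior_image (hf : ContinuousOn f (Icc a b))
    (hg : LeftInvOn g f (Icc a b)) {s : ℝ} (hs : s ∈ interior (f '' Icc a b)) :
    ContinuousAt g s := by
  obtain ⟨t, ht, rfl⟩ := interior_subset hs
  have hS : f '' Icc a b ∈ 𝓝 (f t) := mem_interior_iff_mem_nhds.1 hs
  have himage : g '' (f '' Icc a b) ∈ 𝓝 (g (f t)) := by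
    rw [hg.image_image, hg ht]
    have hIoo := hg.mem_Ioo_of_mem_interior_image hf ht hs
    exact Icc_mem_nhds hIoo.1 hIoo.2
  -- `g` is monotone or antitone on the image and maps a neighbourhood of `f t` onto one of `t`
  rcases hf.strictMonoOn_of_injOn_Icc' (ht.1.trans ht.2) hg.injOn with hmono | hanti
  · refine continuousAt_of_monotoneOn_of_image_mem_nhds ?_ hS himage
    rintro _ ⟨x, hx, rfl⟩ _ ⟨y, hy, rfl⟩ hxy
    rw [hg hx, hg hy]
    exact (hmono.le_iff_le hx hy).1 hxy
  · refine continuous_ofDual.continuousAt.comp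
      (f := OrderDual.toDual ∘ g) (continuousAt_of_monotoneOn_of_image_mem_nhds ?_ hS himage)
    rintro _ ⟨x, hx, rfl⟩ _ ⟨y, hy, rfl⟩ hxy
    rw [Function.comp_apply, Function.comp_apply, hg hx, hg hy]
    exact (hanti.le_iff_ge hx hy).1 hxy

end Set.LeftInvOn

theorem abs_iteratedDerivWithin_leftInvOn_le {f g : ℝ → ℝ} {a b c M : ℝ} {n : ℕ}
    (hf : ContinuousOn f (Icc a b)) (hfU : ContDiffOn ℝ (n + 1) f (Ioo a b)) (hc : 0 < c)
    (hc1 : c ≤ 1) (hM : 1 ≤ M) (hf' : ∀ x ∈ Ioo a b, c ≤ |deriv f x|)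
    (hfM : ∀ i, 2 ≤ i → i ≤ n + 1 → ∀ x ∈ Ioo a b, |iteratedDeriv i f x| ≤ M)
    (hg : LeftInvOn g f (Icc a b)) {k : ℕ} (hk : k ≤ n) {s : ℝ}
    (hs : s ∈ interior (f '' Icc a b)) :
    |iteratedDerivWithin (k + 1) g (f '' Icc a b) s|
      ≤ odeDerivBound (n ! * (n ! / c ^ (n + 1)) * M ^ n) n := by
  have hf'U : ContDiffOn ℝ n (deriv f) (Ioo a b) := hfU.deriv_of_isOpen isOpen_Ioo le_rfl
  have hgV : MapsTo g (interior (f '' Icc a b)) (Ioo a b) := by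
    intro s hs
    obtain ⟨t, ht, rfl⟩ := interior_subset hs
    rw [hg ht]
    exact hg.mem_Ioo_of_mem_interior_image hf ht hs
  have hfg : ∀ s ∈ interior (f '' Icc a b), f (g s) = s := by
    intro s hs
    obtain ⟨t, ht, rfl⟩ := interior_subset hs
    rw [hg ht]
  have hderiv : ∀ s ∈ interior (f '' Icc a b), HasDerivAt g (deriv f (g s))⁻¹ s := by
    intro s hs
    refine HasDerivAt.of_local_left_inverse (hg.continuousAt_of_mem_interior_image hf hs) ?_
      (abs_pos.1 (hc.trans_le (hf' _ (hgV hs))))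
      (Filter.eventually_of_mem (isOpen_interior.mem_nhds hs) hfg)
    exact ((hfU.differentiableOn (by simp)).differentiableAt
      (isOpen_Ioo.mem_nhds (hgV hs))).hasDerivAt
  rw [iteratedDerivWithin_of_mem_nhds (mem_interior_iff_mem_nhds.1 hs)]
  refine abs_iteratedDeriv_le_odeDerivBound (h := fun y => (deriv f y)⁻¹) isOpen_Ioo
    isOpen_interior hgV hderiv (hf'U.inv fun x hx => abs_pos.1 (hc.trans_le (hf' x hx)))
    (fun i hi x hx => abs_iteratedDeriv_inv_comp_le isOpen_Ioo hf'U hc hc1 hM hf' ?_ hi hx)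
    le_rfl hk hs
  intro i h1 h2 x hx
  rw [← iteratedDeriv_succ']
  exact hfM (i + 1) (by omega) (by omega) x hx

namespace CurveHyp

variable {γ : ℝ → ℝ} {N : ℕ}

theorem ne_zero (h : CurveHyp γ N) {x : ℝ} (hx : x ∈ Ioc 0 1) : γ x ≠ 0 := by
  obtain ⟨C, hC, hlow⟩ := h.2.2.2.1 1 le_rfl one_le_two
  intro h0
  have := hlow x hx
  rw [h0, div_zero, abs_zero] at this
  linarith

theorem exists_uniform_upper (h : CurveHyp γ N) : ∃ M, 1 ≤ M ∧ ∀ m, 1 ≤ m → m ≤ N →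
    ∀ x ∈ Ioc (0 : ℝ) 1, |x ^ m * iteratedDerivWithin m γ (Ioc 0 1) x / γ x| ≤ M := by
  have hfin : ∀ᶠ M in atTop, ∀ m ∈ Finset.Icc 1 N, ∀ x ∈ Ioc (0 : ℝ) 1,
      |x ^ m * iteratedDerivWithin m γ (Ioc 0 1) x / γ x| ≤ M := by
    rw [eventually_all_finset]
    intro m hm
    obtain ⟨C, -, hC⟩ := h.2.2.2.2 m (Finset.mem_Icc.1 hm).1 (Finset.mem_Icc.1 hm).2
    filter_upwards [eventually_ge_atTop C] with M hM x hx using (hC x hx).trans hM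
  obtain ⟨M, hM1, hM⟩ := ((eventually_ge_atTop 1).and hfin).exists
  exact ⟨M, hM1, fun m h1 h2 => hM m (Finset.mem_Icc.2 ⟨h1, h2⟩)⟩

theorem exists_abs_le_exp_mul_abs (h : CurveHyp γ N) (hN : 1 ≤ N) : ∃ K, 0 ≤ K ∧
    ∀ x ∈ Ioc (0 : ℝ) 1, ∀ y ∈ Ioc (0 : ℝ) 1, x ≤ 2 * y → y ≤ 2 * x →
      |γ x| ≤ Real.exp K * |γ y| := by
  obtain ⟨K, hK0, hK⟩ := h.2.2.2.2 1 le_rfl hN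
  refine ⟨K, hK0.le, fun x hx y hy hxy hyx =>
    abs_le_exp_mul_abs_of_abs_mul_deriv_div_le (convex_Ioc 0 1) (fun z hz => ?_)
      (fun z hz => h.ne_zero hz) (fun z hz => by simpa using hK z hz) hx hy hx.1 hxy hyx⟩
  exact (h.1.differentiableOn (Nat.cast_ne_zero.2 (by omega)) z hz).hasDerivWithinAt

end CurveHyp

theorem two_zpow_le_half {j : ℤ} (hj : j ≤ -1) : (2 : ℝ) ^ j ≤ 1 / 2 := by
  simpa using zpow_le_zpow_right₀ (by norm_num : (1 : ℝ) ≤ 2) hj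

theorem iteratedDeriv_Gam (γ : ℝ → ℝ) (j : ℤ) (m : ℕ) {t : ℝ} (ht : (2 : ℝ) ^ j * t ∈ Ioo 0 1) :
    iteratedDeriv m (Gam γ j) t
      = ((2 : ℝ) ^ j) ^ m * iteratedDerivWithin m γ (Ioc 0 1) (2 ^ j * t) / γ (2 ^ j) := by
  have hT : (fun y => (2 : ℝ) ^ j * y) ⁻¹' Ioc 0 1 ∈ 𝓝 t :=
    (continuous_const_mul _).continuousAt.preimage_mem_nhds (Ioc_mem_nhds ht.1 ht.2)
  rw [show Gam γ j = fun t => γ (2 ^ j * t) / γ (2 ^ j) from rfl, iteratedDeriv_div_const,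
    ← iteratedDerivWithin_of_mem_nhds hT, iteratedDerivWithin_comp_const_mul_preimage
      (uniqueDiffOn_Ioc 0 1) (zpow_ne_zero j two_ne_zero) ⟨ht.1, ht.2.le⟩]

theorem CurveHyp.exists_Gam_bounds {γ : ℝ → ℝ} {N : ℕ} (h : CurveHyp γ N) (hN : 1 ≤ N) :
    ∃ c M : ℝ, 0 < c ∧ c ≤ 1 ∧ 1 ≤ M ∧ ∀ j : ℤ, j ≤ -1 → ∀ t ∈ Ioo (1 / 2 : ℝ) 2,
      c ≤ |iteratedDeriv 2 (Gam γ j) t| ∧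
      ∀ m, 1 ≤ m → m ≤ N → |iteratedDeriv m (Gam γ j) t| ≤ M := by
  obtain ⟨K, hK0, hK⟩ := h.exists_abs_le_exp_mul_abs hN
  obtain ⟨M₀, hM₀, hup⟩ := h.exists_uniform_upper
  obtain ⟨c₂, hc₂, hlow⟩ := h.2.2.2.1 2 one_le_two le_rfl
  have hexp : 1 ≤ Real.exp K := Real.one_le_exp hK0
  refine ⟨min 1 (c₂ / (4 * Real.exp K)), 2 ^ N * M₀ * Real.exp K, by positivity,
    min_le_left _ _, one_le_mul_of_one_le_of_one_le
      (one_le_mul_of_one_le_of_one_le (one_le_pow₀ one_le_two) hM₀) hexp, fun j hj t ht => ?_⟩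
  set p := (2 : ℝ) ^ j with hp_def
  set x := p * t with hx_def
  have hp : 0 < p := zpow_pos two_pos j
  have hp2 : p ≤ 1 / 2 := two_zpow_le_half hj
  have ht0 : 0 < t := by linarith [ht.1]
  have hx : x ∈ Ioo 0 1 := ⟨by positivity, by nlinarith [ht.2]⟩
  have hpI : p ∈ Ioc 0 1 := ⟨hp, by linarith⟩
  have hxI : x ∈ Ioc 0 1 := ⟨hx.1, hx.2.le⟩
  have hformula : ∀ m, |iteratedDeriv m (Gam γ j) t|
      = |x ^ m * iteratedDerivWithin m γ (Ioc 0 1) x / γ x| * |γ x / γ p| / t ^ m := by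
    intro m
    rw [iteratedDeriv_Gam γ j m hx, ← hp_def, ← hx_def, ← abs_mul, ← abs_of_pos (pow_pos ht0 m),
      ← abs_div]
    congr 1
    rw [hx_def, mul_pow, ← hx_def]
    field_simp [h.ne_zero hxI, h.ne_zero hpI]
  have hγp : 0 < |γ p| := abs_pos.2 (h.ne_zero hpI)
  refine ⟨?_, fun m h1 h2 => ?_⟩
  · have hratio : (Real.exp K)⁻¹ ≤ |γ x / γ p| := by
      rw [abs_div, le_div_iff₀ hγp, inv_mul_le_iff₀ (Real.exp_pos K)]
      exact hK p hpI x hxI (by nlinarith [ht.1]) (by nlinarith [ht.2])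
    rw [hformula]
    calc min 1 (c₂ / (4 * Real.exp K)) ≤ c₂ * (Real.exp K)⁻¹ / 2 ^ 2 := by
          rw [← div_eq_mul_inv, div_div, mul_comm]; norm_num
      _ ≤ _ := by gcongr; exacts [hlow x hxI, ht.2.le]
  · have hratio : |γ x / γ p| ≤ Real.exp K := by
      rw [abs_div, div_le_iff₀ hγp]
      exact hK x hxI p hpI (by nlinarith [ht.2]) (by nlinarith [ht.1])
    rw [hformula, div_le_iff₀ (by positivity)]
    calc _ ≤ M₀ * Real.exp K := by gcongr; exact hup m h1 h2 x hxI
      _ ≤ M₀ * Real.exp K * (2 * t) ^ m := by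
          refine le_mul_of_one_le_right (by positivity) (one_le_pow₀ (by linarith [ht.1]))
      _ = 2 ^ m * M₀ * Real.exp K * t ^ m := by ring
      _ ≤ 2 ^ N * M₀ * Real.exp K * t ^ m := by gcongr; norm_num

theorem contDiffOn_Gam {γ : ℝ → ℝ} {N : ℕ} (h : ContDiffOn ℝ N γ (Ioc 0 1)) {j : ℤ}
    (hj : j ≤ -1) : ContDiffOn ℝ N (Gam γ j) (Ioc 0 2) := by
  refine (h.comp (contDiff_const.mul contDiff_id).contDiffOn fun t ht => ⟨?_, ?_⟩).div_const _
  · exact mul_pos (zpow_pos two_pos j) ht.1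
  · change (2 : ℝ) ^ j * t ≤ 1
    nlinarith [two_zpow_le_half hj, zpow_pos (two_pos : (0 : ℝ) < 2) j, ht.2]

theorem eqOn_GamDeriv (γ : ℝ → ℝ) (j : ℤ) :
    EqOn (GamDeriv γ j) (deriv (Gam γ j)) (Ioo (1 / 2) 2) :=
  fun _ ht => derivWithin_of_mem_nhds (Icc_mem_nhds ht.1 ht.2)

theorem iteratedDeriv_GamDeriv (γ : ℝ → ℝ) (j : ℤ) (i : ℕ) {t : ℝ} (ht : t ∈ Ioo (1 / 2 : ℝ) 2) :
    iteratedDeriv i (GamDeriv γ j) t = iteratedDeriv (i + 1) (Gam γ j) t := by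
  rw [(eqOn_GamDeriv γ j).iteratedDeriv_of_isOpen isOpen_Ioo i ht, iteratedDeriv_succ']

theorem continuousOn_GamDeriv {γ : ℝ → ℝ} {N : ℕ} (h : ContDiffOn ℝ N γ (Ioc 0 1)) (hN : 1 ≤ N)
    {j : ℤ} (hj : j ≤ -1) : ContinuousOn (GamDeriv γ j) (Icc (1 / 2) 2) :=
  ((contDiffOn_Gam h hj).mono fun _ ht => ⟨by linarith [ht.1], ht.2⟩).continuousOn_derivWithin
    (uniqueDiffOn_Icc (by norm_num)) (by exact_mod_cast hN)

theorem contDiffOn_GamDeriv {γ : ℝ → ℝ} {N n : ℕ} (h : ContDiffOn ℝ N γ (Ioc 0 1))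
    (hn : n + 1 ≤ N) {j : ℤ} (hj : j ≤ -1) : ContDiffOn ℝ n (GamDeriv γ j) (Ioo (1 / 2) 2) :=
  (((contDiffOn_Gam h hj).mono fun _ ht => ⟨by linarith [ht.1], ht.2.le⟩).deriv_of_isOpen
    isOpen_Ioo (by exact_mod_cast hn)).congr (eqOn_GamDeriv γ j)

theorem inverse_derivative_bounds_general (N : ℕ) (γ : ℝ → ℝ)
    (h : CurveHyp γ N) :
    ∀ k : ℕ, k < N → ∃ C : ℝ, 0 < C ∧
      ∀ j : ℤ, j ≤ -1 → ∀ g : ℝ → ℝ,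
        (∀ t ∈ Set.Icc (1/2 : ℝ) 2, g (GamDeriv γ j t) = t) →
        ∀ s ∈ interior (GamDeriv γ j '' Set.Icc (1/2 : ℝ) 2),
          |iteratedDerivWithin k g (GamDeriv γ j '' Set.Icc (1/2 : ℝ) 2) s| ≤ C := by
  intro k hk
  rcases k with _ | k
  · refine ⟨2, two_pos, fun j _ g hg s hs => ?_⟩
    obtain ⟨t, ht, rfl⟩ := interior_subset hs
    rw [iteratedDerivWithin_zero, hg t ht, abs_of_pos (by linarith [ht.1])]
    exact ht.2
  obtain ⟨n, rfl⟩ : ∃ n, N = n + 2 := ⟨N - 2, by omega⟩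
  obtain ⟨c, M, hc, hc1, hM, hΓ⟩ := h.exists_Gam_bounds (by omega)
  have hA : 0 < n ! * (n ! / c ^ (n + 1)) * M ^ n :=
    mul_pos (by positivity) (pow_pos (by linarith) n)
  refine ⟨_, hA.trans_le (le_odeDerivBound _ n), fun j hj g hg s hs => ?_⟩
  refine abs_iteratedDerivWithin_leftInvOn_le (continuousOn_GamDeriv h.1 (by omega) hj)
    (contDiffOn_GamDeriv (n := n + 1) h.1 le_rfl hj) hc hc1 hM (fun x hx => ?_)
    (fun i _ hi x hx => ?_) hg (by omega) hs
  · rw [← iteratedDeriv_one, iteratedDeriv_GamDeriv γ j 1 hx]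
    exact (hΓ j hj x hx).1
  · rw [iteratedDeriv_GamDeriv γ j i hx]
    exact (hΓ j hj x hx).2 (i + 1) (by omega) (by omega)

/-- Lemma 2.1 (v): bounds, uniform in `j ≤ -1`, for the derivatives of the inverse
function of `Γ_j'` on the interior of `Γ_j'([1/2,2])`. -/
theorem inverse_derivative_bounds (N : ℕ) (hN : 3 ≤ N) (γ : ℝ → ℝ)
    (h : CurveHyp γ N) :
    ∀ k : ℕ, k < N → ∃ C : ℝ, 0 < C ∧
      ∀ j : ℤ, j ≤ -1 → ∀ g : ℝ → ℝ,
        (∀ t ∈ Set.Icc (1/2 : ℝ) 2, g (GamDeriv γ j t) = t) →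
        ∀ s ∈ interior (GamDeriv γ j '' Set.Icc (1/2 : ℝ) 2),
          |iteratedDerivWithin k g (GamDeriv γ j '' Set.Icc (1/2 : ℝ) 2) s| ≤ C :=
  inverse_derivative_bounds_general N γ h

end
end

section
/- Let q ∈ (1,∞) and let F : ℝ → ℝ be continuously differentiable. Then sup_{u∈[1,2]} |F(u)|^q ≤ |F(1)|^q + q·(∫₁² |F(u)|^q du)^{1/q′}·(∫₁² |F′(u)|^q du)^{1/q}, where q′ is the conjugate exponent of q, i.e. 1/q + 1/q′ = 1. -/
/-!
By the fundamental theorem of calculus, `|F u|^q - |F 1|^q` is the integral over `[1, u]` of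
`(|F|^q)' = q |F|^(q-2) F F'`, which is bounded by `q |F|^(q-1) |F'|`. Hölder's inequality with
the exponents `q' = q/(q-1)` and `q` bounds the integral of the latter over `[1, 2]`.
-/

open MeasureTheory Set

theorem abs_rpow_sub_two_mul_abs {p : ℝ} (hp : p ≠ 1) (t : ℝ) :
    |t| ^ (p - 2) * |t| = |t| ^ (p - 1) := by
  rw [← Real.rpow_add_one' (abs_nonneg t) (by contrapose! hp; linarith)]
  ring_nf

theorem mul_abs_rpow_sub_two_mul_le {p : ℝ} (hp : 1 < p) (t d : ℝ) :
    p * |t| ^ (p - 2) * t * d ≤ p * (|t| ^ (p - 1) * |d|) := by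
  calc p * |t| ^ (p - 2) * t * d ≤ |p * |t| ^ (p - 2) * t * d| := le_abs_self _
    _ = p * (|t| ^ (p - 2) * |t| * |d|) := by
      rw [abs_mul, abs_mul, abs_mul, abs_of_pos (by linarith : 0 < p),
        abs_of_nonneg (Real.rpow_nonneg (abs_nonneg t) _)]
      ring
    _ = p * (|t| ^ (p - 1) * |d|) := by rw [abs_rpow_sub_two_mul_abs hp.ne']

theorem abs_rpow_comp_sub_le_integral {F : ℝ → ℝ} (hF : ContDiff ℝ 1 F) {p a b : ℝ} (hp : 1 < p)
    (hab : a ≤ b) :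
    |F b| ^ p - |F a| ^ p ≤ ∫ x in a..b, p * (|F x| ^ (p - 1) * |deriv F x|) := by
  have hFc : Continuous F := hF.continuous
  have hbound : Continuous fun x => p * (|F x| ^ (p - 1) * |deriv F x|) := by
    have := hF.continuous_deriv le_rfl
    fun_prop (disch := linarith)
  refine intervalIntegral.sub_le_integral_of_hasDeriv_right_of_le (g := fun x => |F x| ^ p) hab
    ?_ (fun x _ => ?_) hbound.integrableOn_Icc
    (fun x _ => mul_abs_rpow_sub_two_mul_le hp (F x) (deriv F x))
  · exact ((Real.continuous_rpow_const (by linarith)).comp hFc.abs).continuousOn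
  · exact ((hasDerivAt_abs_rpow (F x) hp).comp x
      ((hF.differentiable one_ne_zero x).hasDerivAt)).hasDerivWithinAt

theorem integral_abs_rpow_sub_one_mul_abs_le {α : Type*} [MeasurableSpace α] {μ : Measure α}
    {q : ℝ} (hq : 1 < q) {f g : α → ℝ} (hf : MemLp f (ENNReal.ofReal q) μ)
    (hg : MemLp g (ENNReal.ofReal q) μ) :
    ∫ x, |f x| ^ (q - 1) * |g x| ∂μ ≤
      (∫ x, |f x| ^ q ∂μ) ^ (1 - 1 / q) * (∫ x, |g x| ^ q ∂μ) ^ (1 / q) := by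
  have hpq : (q / (q - 1)).HolderConjugate q := (Real.HolderConjugate.conjExponent hq).symm
  have hf' : MemLp (fun x => |f x| ^ (q - 1)) (ENNReal.ofReal (q / (q - 1))) μ := by
    have := hf.norm_rpow_div (ENNReal.ofReal (q - 1))
    rwa [ENNReal.toReal_ofReal (by linarith), ← ENNReal.ofReal_div_of_pos (by linarith)] at this
  have key := integral_mul_le_Lp_mul_Lq_of_nonneg hpq
    (ae_of_all _ fun x => Real.rpow_nonneg (abs_nonneg (f x)) _)
    (ae_of_all _ fun x => abs_nonneg (g x)) hf' hg.abs
  have hexp : ∀ t : ℝ, (|t| ^ (q - 1)) ^ (q / (q - 1)) = |t| ^ q := fun t => by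
    rw [← Real.rpow_mul (abs_nonneg t), mul_div_cancel₀ _ (by linarith)]
  have hconj : 1 / (q / (q - 1)) = 1 - 1 / q := by
    field_simp
  simpa only [hexp, hconj] using key

theorem ContinuousOn.memLp_restrict_Icc {f : ℝ → ℝ} {a b : ℝ} (hf : ContinuousOn f (Icc a b))
    (p : ENNReal) : MemLp f p (volume.restrict (Icc a b)) := by
  obtain ⟨C, hC⟩ := isCompact_Icc.exists_bound_of_continuousOn hf
  exact MemLp.of_bound (hf.aestronglyMeasurable measurableSet_Icc) C
    ((ae_restrict_iff' measurableSet_Icc).2 (ae_of_all _ hC))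

/-- Lemma 2.2: for `q > 1` and `F ∈ C¹(ℝ)`,
`sup_{u∈[1,2]} |F(u)|^q ≤ |F(1)|^q + q (∫₁²|F|^q)^{1/q'} (∫₁²|F'|^q)^{1/q}`. -/
theorem sup_pow_le_of_C1 (q : ℝ) (hq : 1 < q) (F : ℝ → ℝ) (hF : ContDiff ℝ 1 F) :
    ∀ u ∈ Set.Icc (1 : ℝ) 2,
      |F u| ^ q ≤ |F 1| ^ q +
        q * (∫ v in Set.Icc (1 : ℝ) 2, |F v| ^ q) ^ (1 - 1 / q) *
          (∫ v in Set.Icc (1 : ℝ) 2, |deriv F v| ^ q) ^ (1 / q) := by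
  rintro u ⟨hu1, hu2⟩
  have hF'c : Continuous (deriv F) := hF.continuous_deriv le_rfl
  have hintegrand : Continuous fun x => |F x| ^ (q - 1) * |deriv F x| := by
    have := hF.continuous
    fun_prop (disch := linarith)
  calc |F u| ^ q = |F 1| ^ q + (|F u| ^ q - |F 1| ^ q) := by ring
    _ ≤ |F 1| ^ q + q * ∫ v in (1 : ℝ)..u, |F v| ^ (q - 1) * |deriv F v| := by
      rw [← intervalIntegral.integral_const_mul]
      gcongr
      exact abs_rpow_comp_sub_le_integral hF hq hu1
    _ ≤ |F 1| ^ q + q * ∫ v in Icc (1 : ℝ) 2, |F v| ^ (q - 1) * |deriv F v| := by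
      rw [intervalIntegral.integral_of_le hu1]
      gcongr
      · exact ae_of_all _ fun v => by positivity
      · exact hintegrand.integrableOn_Icc
      · exact Ioc_subset_Icc_self.trans (Icc_subset_Icc_right hu2)
    _ ≤ _ := by
      rw [mul_assoc]
      gcongr
      exact integral_abs_rpow_sub_one_mul_abs_le hq
        (hF.continuous.continuousOn.memLp_restrict_Icc _) (hF'c.continuousOn.memLp_restrict_Icc _)
end
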